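/- arXiv:2003.06165 — 2 statements merged into one kernel-verified Lean document; each statement's English description precedes it below -/
import Mathlib

section
/- Let p be prime, H ≤ F_p^* a multiplicative subgroup, a ∈ F_p^*, N an interval of N consecutive integers, and m ≥ 2 an integer. Then S^m ≤ (N^{m-1}/|H|) · ∑_{λ=0}^{p-1} R(λ) |∑_{u∈H} e_p(aλu)|^m, where S = ∑_{n∈N} |∑_{h∈H} e_p(anh)| and R(λ) is the number of (n,h) ∈ N × H with nh ≡ λ (mod p). -/
open scoped Classical

/-- `ep p z = exp(2πi z/p)`, where `z ∈ F_p` is lifted to `{0,...,p-1}`. -/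
noncomputable def ep (p : ℕ) (z : ZMod p) : ℂ :=
  Complex.exp (2 * Real.pi * Complex.I * z.val / p)

/-!
Since `λ ↦ ‖∑_{u ∈ H} e_p(aλu)‖` is invariant under `λ ↦ λh` for `h ∈ H`, the sum
`∑_{n ∈ 𝒩} ‖∑_{u ∈ H} e_p(anu)‖ ^ m` is `1/|H|` times the same sum over all pairs `(n, h)`
with `anu` replaced by `anhu`, i.e. `1/|H| · ∑_λ R(λ) ‖∑_{u ∈ H} e_p(aλu)‖ ^ m`.
The theorem is then the power-mean inequality `(∑_{n ∈ 𝒩} x_n)^m ≤ N^{m-1} ∑_{n ∈ 𝒩} x_n^m`.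
-/

open Finset

theorem Subgroup.sum_units_mul_mul_eq {R M : Type*} [CommMonoid R] [AddCommMonoid M]
    (H : Subgroup Rˣ) [Fintype H] (ψ : R → M) (x : R) (h : H) :
    ∑ u : H, ψ (x * ((h : Rˣ) : R) * ((u : Rˣ) : R)) = ∑ u : H, ψ (x * ((u : Rˣ) : R)) :=
  Fintype.sum_equiv (Equiv.mulLeft h) _ _ fun u => by simp [mul_assoc]

theorem sum_natCard_fiber_mul {ι G β M : Type*} [Fintype G] [Fintype β] [CommSemiring M]
    (s : Finset ι) (key : ι × G → β) (g : β → M) :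
    ∑ b, (Nat.card {q : ι × G // q.1 ∈ s ∧ key q = b} : M) * g b
      = ∑ i ∈ s, ∑ x, g (key (i, x)) := by
  rw [← sum_product' (f := fun i x => g (key (i, x))), ← sum_fiberwise' (s ×ˢ univ) key g]
  refine sum_congr rfl fun b _ => ?_
  rw [sum_const, nsmul_eq_mul, ← Nat.card_eq_finsetCard]
  congr 2
  exact Nat.card_congr (Equiv.subtypeEquivRight fun q => by simp)

theorem Int.card_Icc_add_one_add (L : ℤ) (N : ℕ) : #(Icc (L + 1) (L + N)) = N := by
  rw [Int.card_Icc, show L + N + 1 - (L + 1) = N by ring, Int.toNat_natCast]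

theorem stmt_4 (p : ℕ) [Fact p.Prime] (H : Subgroup (ZMod p)ˣ) (a : (ZMod p)ˣ)
    (L : ℤ) (N : ℕ) (m : ℕ) (hm : 2 ≤ m)
    (R : ZMod p → ℕ)
    (hR : ∀ lam : ZMod p,
      R lam = Nat.card {q : ℤ × H //
        q.1 ∈ Finset.Icc (L + 1) (L + N) ∧
          (q.1 : ZMod p) * ((q.2 : (ZMod p)ˣ) : ZMod p) = lam}) :
    (∑ n ∈ Finset.Icc (L + 1) (L + N),
        ‖∑ h : H, ep p ((a : ZMod p) * (n : ZMod p) * ((h : (ZMod p)ˣ) : ZMod p))‖) ^ m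
      ≤ (N : ℝ) ^ (m - 1) / (Nat.card H : ℝ) *
          ∑ lam : ZMod p, (R lam : ℝ) *
            ‖∑ u : H, ep p ((a : ZMod p) * lam * ((u : (ZMod p)ˣ) : ZMod p))‖ ^ m := by
  set f : ZMod p → ℝ := fun lam => ‖∑ u : H, ep p ((a : ZMod p) * lam * ((u : (ZMod p)ˣ) : ZMod p))‖
  have power_mean : (∑ n ∈ Icc (L + 1) (L + N), f n) ^ m
      ≤ (N : ℝ) ^ (m - 1) * ∑ n ∈ Icc (L + 1) (L + N), f n ^ m := by
    obtain ⟨k, rfl⟩ : ∃ k, m = k + 1 := ⟨m - 1, by omega⟩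
    simpa [Int.card_Icc_add_one_add] using
      pow_sum_le_card_mul_sum_pow (s := Icc (L + 1) (L + N)) (fun n _ => norm_nonneg _) k
  have fiber_sum : ∑ lam, (R lam : ℝ) * f lam ^ m
      = Nat.card H * ∑ n ∈ Icc (L + 1) (L + N), f n ^ m := by
    simp only [hR, sum_natCard_fiber_mul, mul_sum]
    refine sum_congr rfl fun n _ => ?_
    simp only [f, ← mul_assoc, H.sum_units_mul_mul_eq, sum_const, card_univ, nsmul_eq_mul,
      Nat.card_eq_fintype_card]
  have hH : (0 : ℝ) < Nat.card H := by exact_mod_cast Nat.card_pos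
  rw [fiber_sum, div_mul_eq_mul_div, mul_div_assoc, mul_div_cancel_left₀ _ hH.ne']
  exact power_mean
end

section
/- Let p be prime, H ≤ F_p^* a multiplicative subgroup, a ∈ F_p^*, N an interval of N consecutive integers, and m ≥ 2. Then S^{2m} ≤ (N^{2m-2}/|H|^2) · J(N,H) · p · T_m(H), where S = ∑_{n∈N} |∑_{h∈H} e_p(anh)|, J(N,H) is the number of solutions of n1 h1 ≡ n2 h2 (mod p) with n_i ∈ N, h_i ∈ H, and T_m(H) is the number of solutions of h_1+...+h_m ≡ h_{m+1}+...+h_{2m} (mod p) with all h_i ∈ H. -/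
/-!
Let `η(x) = ∑_{h ∈ H} e_p(xh)` be the Gauss period of `H`; it is constant on `H`-cosets. Hence
`|H| S = ∑_{n, h} |η(anh)| = ∑_μ R(μ) |η(aμ)|`, where `R(μ)` counts the representations `μ = nh`
with `n ∈ 𝒩`, `h ∈ H`. Hölder's inequality with weights `R` followed by Cauchy–Schwarz bounds
`(∑ R F)^{2m}` by `(∑ R)^{2m-2} (∑ R²) (∑ F^{2m})`, and the three factors are `N |H|`, `J(N, H)`
and, by orthogonality of additive characters, `p T_m(H)`.
-/

open scoped Classical

/-- number of `2m`-tuples in `H^{2m}` with `h₁+⋯+h_m ≡ h_{m+1}+⋯+h_{2m} (mod p)`. -/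
noncomputable def T (p m : ℕ) (H : Subgroup (ZMod p)ˣ) : ℕ :=
  Nat.card {t : (Fin m → H) × (Fin m → H) //
    (∑ i, ((t.1 i : (ZMod p)ˣ) : ZMod p)) = ∑ i, ((t.2 i : (ZMod p)ˣ) : ZMod p)}

/-- number of quadruples `(n₁,n₂,h₁,h₂) ∈ 𝒩² × H²` with `n₁h₁ ≡ n₂h₂ (mod p)`,
where `𝒩 = {L+1,...,L+N}`. -/
noncomputable def J (p : ℕ) (L : ℤ) (N : ℕ) (H : Subgroup (ZMod p)ˣ) : ℕ :=
  Nat.card {q : (ℤ × ℤ) × H × H //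
    q.1.1 ∈ Finset.Icc (L + 1) (L + N) ∧ q.1.2 ∈ Finset.Icc (L + 1) (L + N) ∧
      (q.1.1 : ZMod p) * ((q.2.1 : (ZMod p)ˣ) : ZMod p)
        = (q.1.2 : ZMod p) * ((q.2.2 : (ZMod p)ˣ) : ZMod p)}

open Finset

section Holder

variable {ι : Type*} (s : Finset ι) (w f : ι → ℝ)

theorem pow_sum_mul_le_sum_pow_mul_sum_mul_pow (hw : ∀ i, 0 ≤ w i) (hf : ∀ i, 0 ≤ f i)
    {n : ℕ} (hn : n ≠ 0) :
    (∑ i ∈ s, w i * f i) ^ n ≤ (∑ i ∈ s, w i) ^ (n - 1) * ∑ i ∈ s, w i * f i ^ n := by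
  have hW : 0 ≤ ∑ i ∈ s, w i := sum_nonneg fun i _ => hw i
  have hX : 0 ≤ ∑ i ∈ s, w i * f i ^ n :=
    sum_nonneg fun i _ => mul_nonneg (hw i) (pow_nonneg (hf i) n)
  have hn' : (1 : ℝ) ≤ n := by exact_mod_cast Nat.one_le_iff_ne_zero.2 hn
  have holder := Real.inner_le_weight_mul_Lp_of_nonneg s hn' w f hw hf
  simp only [Real.rpow_natCast] at holder
  calc (∑ i ∈ s, w i * f i) ^ n
      ≤ ((∑ i ∈ s, w i) ^ (1 - (n : ℝ)⁻¹) * (∑ i ∈ s, w i * f i ^ n) ^ (n : ℝ)⁻¹) ^ n :=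
        pow_le_pow_left₀ (sum_nonneg fun i _ => mul_nonneg (hw i) (hf i)) holder n
    _ = (∑ i ∈ s, w i) ^ (n - 1) * ∑ i ∈ s, w i * f i ^ n := by
        rw [mul_pow, ← Real.rpow_natCast, ← Real.rpow_natCast, ← Real.rpow_mul hW,
          ← Real.rpow_mul hX, inv_mul_cancel₀ (by positivity), Real.rpow_one, sub_mul,
          inv_mul_cancel₀ (by positivity), one_mul, ← Real.rpow_natCast, Nat.cast_sub (by omega),
          Nat.cast_one]

theorem pow_sum_mul_le_sum_pow_mul_sum_sq_mul_sum_pow (hw : ∀ i, 0 ≤ w i) (hf : ∀ i, 0 ≤ f i)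
    {n : ℕ} (hn : n ≠ 0) :
    (∑ i ∈ s, w i * f i) ^ (2 * n)
      ≤ (∑ i ∈ s, w i) ^ (2 * n - 2) * (∑ i ∈ s, w i ^ 2) * ∑ i ∈ s, f i ^ (2 * n) := by
  have cauchySchwarz := sum_mul_sq_le_sq_mul_sq s w (fun i => f i ^ n)
  simp only [← pow_mul, mul_comm n 2] at cauchySchwarz
  calc (∑ i ∈ s, w i * f i) ^ (2 * n) = ((∑ i ∈ s, w i * f i) ^ n) ^ 2 := by ring
    _ ≤ ((∑ i ∈ s, w i) ^ (n - 1) * ∑ i ∈ s, w i * f i ^ n) ^ 2 :=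
        pow_le_pow_left₀ (pow_nonneg (sum_nonneg fun i _ => mul_nonneg (hw i) (hf i)) n)
          (pow_sum_mul_le_sum_pow_mul_sum_mul_pow s w f hw hf hn) 2
    _ = (∑ i ∈ s, w i) ^ (2 * n - 2) * (∑ i ∈ s, w i * f i ^ n) ^ 2 := by
        rw [mul_pow, ← pow_mul, Nat.sub_mul, one_mul, mul_comm n 2]
    _ ≤ _ := by
        rw [mul_assoc]
        exact mul_le_mul_of_nonneg_left cauchySchwarz (pow_nonneg (sum_nonneg fun i _ => hw i) _)

end Holder

theorem Finset.sum_card_fiber_sq {α β : Type*} [DecidableEq β] [Fintype β] (s : Finset α)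
    (f : α → β) : ∑ b, #{x ∈ s | f x = b} ^ 2 = #{q ∈ s ×ˢ s | f q.1 = f q.2} := by
  rw [card_eq_sum_card_fiberwise (f := fun q => f q.1) (t := univ) fun _ _ => mem_univ _]
  refine sum_congr rfl fun b _ => ?_
  rw [sq, ← card_product, ← filter_product, filter_filter]
  exact congrArg card <| filter_congr fun q _ =>
    ⟨fun ⟨h1, h2⟩ => ⟨h1.trans h2.symm, h1⟩, fun ⟨h, h1⟩ => ⟨h1, h.symm.trans h1⟩⟩

theorem Finset.sum_comp_eq_sum_card_fiber_mul {α β R : Type*} [DecidableEq β] [Fintype β]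
    [Semiring R] (s : Finset α) (f : α → β) (F : β → R) :
    ∑ x ∈ s, F (f x) = ∑ b, (#{x ∈ s | f x = b} : R) * F b := by
  rw [← sum_fiberwise' s f F]
  simp only [sum_const, nsmul_eq_mul]

namespace AddChar

theorem map_sum_eq_prod {A M ι : Type*} [AddCommMonoid A] [CommMonoid M] (ψ : AddChar A M)
    (s : Finset ι) (a : ι → A) : ψ (∑ i ∈ s, a i) = ∏ i ∈ s, ψ (a i) := by
  induction s using Finset.cons_induction with
  | empty => simp
  | cons i s hi ih => rw [sum_cons, prod_cons, map_add_eq_mul, ih]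

variable {R : Type*} [CommRing R] {ι : Type*} [Fintype ι]

theorem sum_apply_mul_pow (ψ : AddChar R ℂ) (u : ι → R) (x : R) (m : ℕ) :
    (∑ i, ψ (x * u i)) ^ m = ∑ t : Fin m → ι, ψ (x * ∑ j, u (t j)) := by
  simp only [Fintype.sum_pow, mul_sum, map_sum_eq_prod]

theorem sum_norm_sum_apply_mul_pow [Fintype R] [DecidableEq R] {ψ : AddChar R ℂ}
    (hψ : ψ.IsPrimitive) (u : ι → R) (m : ℕ) :
    ∑ x, ‖∑ i, ψ (x * u i)‖ ^ (2 * m)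
      = Fintype.card R *
        Nat.card {t : (Fin m → ι) × (Fin m → ι) // ∑ j, u (t.1 j) = ∑ j, u (t.2 j)} := by
  have hnorm : ∀ z : ℂ, (‖z‖ : ℂ) ^ (2 * m) = z ^ m * (starRingEnd ℂ z) ^ m := by
    intro z
    rw [← mul_pow, RCLike.mul_conj, pow_mul]
    rfl
  have hconj : ∀ x, starRingEnd ℂ (∑ i, ψ (x * u i)) = ∑ i, ψ (-x * u i) := by
    intro x
    simp only [map_sum, ← map_neg_eq_conj, neg_mul]
  have hexpand : ∀ x, (‖∑ i, ψ (x * u i)‖ : ℂ) ^ (2 * m) = ∑ q : (Fin m → ι) × (Fin m → ι),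
      ψ (x * (∑ j, u (q.1 j) - ∑ j, u (q.2 j))) := by
    intro x
    rw [hnorm, hconj, sum_apply_mul_pow, sum_apply_mul_pow, sum_mul_sum, Fintype.sum_prod_type]
    simp only [← map_add_eq_mul, neg_mul, sub_eq_add_neg, mul_add, mul_neg]
  apply Complex.ofReal_injective
  push_cast
  simp only [hexpand]
  rw [sum_comm]
  simp only [sum_mulShift _ hψ, sub_eq_zero]
  rw [← Nat.cast_sum, ← sum_filter, sum_const, smul_eq_mul, mul_comm, Nat.card_eq_fintype_card,
    Fintype.card_subtype, Nat.cast_mul]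

end AddChar

theorem ep_eq_stdAddChar {p : ℕ} [NeZero p] (z : ZMod p) : ep p z = ZMod.stdAddChar z := by
  rw [ZMod.stdAddChar_apply, ZMod.toCircle_apply, ep]

section GaussPeriod

variable {p : ℕ} [NeZero p] (H : Subgroup (ZMod p)ˣ)

noncomputable def gaussPeriod (x : ZMod p) : ℂ :=
  ∑ h : H, ep p (x * ((h : (ZMod p)ˣ) : ZMod p))

theorem gaussPeriod_mul_of_mem (x : ZMod p) (h : H) :
    gaussPeriod H (x * ((h : (ZMod p)ˣ) : ZMod p)) = gaussPeriod H x := by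
  refine Fintype.sum_equiv (Equiv.mulLeft h) _ _ fun h' => ?_
  simp only [Equiv.coe_mulLeft, Subgroup.coe_mul, Units.val_mul, mul_assoc]

theorem sum_norm_gaussPeriod_pow (m : ℕ) :
    ∑ x, ‖gaussPeriod H x‖ ^ (2 * m) = p * T p m H := by
  simp only [gaussPeriod, ep_eq_stdAddChar]
  rw [AddChar.sum_norm_sum_apply_mul_pow (ZMod.isPrimitive_stdAddChar p), ZMod.card]
  rfl

theorem sum_norm_gaussPeriod_units_mul_pow (a : (ZMod p)ˣ) (m : ℕ) :
    ∑ x, ‖gaussPeriod H (a * x)‖ ^ (2 * m) = p * T p m H := by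
  rw [← sum_norm_gaussPeriod_pow]
  exact Fintype.sum_equiv (Units.mulLeft a) _ _ fun _ => rfl

end GaussPeriod

section ReprCount

variable {p : ℕ} [NeZero p] (L : ℤ) (N : ℕ) (H : Subgroup (ZMod p)ˣ)

theorem J_eq_card_filter :
    J p L N H = #{q ∈ (Icc (L + 1) (L + N) ×ˢ (univ : Finset H)) ×ˢ
        (Icc (L + 1) (L + N) ×ˢ (univ : Finset H)) |
      (q.1.1 : ZMod p) * ((q.1.2 : (ZMod p)ˣ) : ZMod p)
        = (q.2.1 : ZMod p) * ((q.2.2 : (ZMod p)ˣ) : ZMod p)} := by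
  rw [J, ← Fintype.card_coe, ← Nat.card_eq_fintype_card]
  refine Nat.card_congr ((Equiv.prodProdProdComm ℤ ℤ H H).subtypeEquiv fun q => ?_)
  simp [and_assoc]

noncomputable def reprCount (μ : ZMod p) : ℕ :=
  #{q ∈ Icc (L + 1) (L + N) ×ˢ (univ : Finset H) |
    (q.1 : ZMod p) * ((q.2 : (ZMod p)ˣ) : ZMod p) = μ}

theorem sum_reprCount : ∑ μ, reprCount L N H μ = N * Nat.card H := by
  have hN : #(Icc (L + 1) (L + N)) = N := by rw [Int.card_Icc]; omega
  unfold reprCount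
  rw [← card_eq_sum_card_fiberwise fun _ _ => mem_univ _, card_product, hN,
    card_univ, Nat.card_eq_fintype_card]

theorem sum_reprCount_sq : ∑ μ, reprCount L N H μ ^ 2 = J p L N H := by
  rw [J_eq_card_filter]
  exact sum_card_fiber_sq _ _

theorem card_mul_sum_norm_gaussPeriod (a : (ZMod p)ˣ) :
    Nat.card H * ∑ n ∈ Icc (L + 1) (L + N), ‖gaussPeriod H (a * n)‖
      = ∑ μ, reprCount L N H μ * ‖gaussPeriod H (a * μ)‖ := by
  unfold reprCount
  rw [← sum_comp_eq_sum_card_fiber_mul, sum_product, mul_sum]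
  refine sum_congr rfl fun n _ => ?_
  simp only [← mul_assoc, gaussPeriod_mul_of_mem, sum_const, card_univ, nsmul_eq_mul,
    Nat.card_eq_fintype_card]

end ReprCount

theorem stmt_5 (p : ℕ) [Fact p.Prime] (H : Subgroup (ZMod p)ˣ) (a : (ZMod p)ˣ)
    (L : ℤ) (N : ℕ) (m : ℕ) (hm : 2 ≤ m) :
    (∑ n ∈ Finset.Icc (L + 1) (L + N),
        ‖∑ h : H, ep p ((a : ZMod p) * (n : ZMod p) * ((h : (ZMod p)ˣ) : ZMod p))‖) ^ (2 * m)
      ≤ (N : ℝ) ^ (2 * m - 2) / (Nat.card H : ℝ) ^ 2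
          * (J p L N H : ℝ) * (p : ℝ) * (T p m H : ℝ) := by
  set S := ∑ n ∈ Icc (L + 1) (L + N), ‖gaussPeriod H (a * n)‖
  have holder := pow_sum_mul_le_sum_pow_mul_sum_sq_mul_sum_pow univ
    (fun μ => (reprCount L N H μ : ℝ)) (fun μ => ‖gaussPeriod H (a * μ)‖)
    (fun _ => Nat.cast_nonneg _) (fun _ => norm_nonneg _) (n := m) (by omega)
  simp only [← card_mul_sum_norm_gaussPeriod, sum_norm_gaussPeriod_units_mul_pow, ← Nat.cast_pow,
    ← Nat.cast_sum, sum_reprCount, sum_reprCount_sq, Nat.cast_mul] at holder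
  have hK : (0 : ℝ) < Nat.card H := by exact_mod_cast Nat.card_pos
  have hsplit : (Nat.card H : ℝ) ^ (2 * m) = Nat.card H ^ (2 * m - 2) * Nat.card H ^ 2 := by
    rw [← pow_add, Nat.sub_add_cancel (by omega)]
  refine le_of_mul_le_mul_left ?_ (pow_pos hK (2 * m))
  calc (Nat.card H : ℝ) ^ (2 * m) * S ^ (2 * m) = (Nat.card H * S) ^ (2 * m) := by ring
    _ ≤ (N * Nat.card H) ^ (2 * m - 2) * J p L N H * (p * T p m H) := holder
    _ = _ := by
        rw [hsplit]
        field_simp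
        ring
end
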